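/- arXiv:1211.0243 — 2 statements merged into one kernel-verified Lean document; each statement's English description precedes it below -/
import Mathlib

section
/- For any real numbers $d_1, d_2 \geq 0$ and $a, b \geq 0$ with $a + b = 1$, we have $\min\{d_1,\; a d_1 + b(1+2a) d_2\} \leq \frac{1+\sqrt{3}}{2}(a d_1 + b d_2)$. -/
/-!
Write `t = 1 + 2a` for the blow-up factor of the rounding solution and `c = (1 + √3)/2`.
If `t ≤ c` the rounding solution alone costs at most `c` times the bi-point cost. Otherwise
the convex combination of the two solutions with weights `1 - c/t` and `c/t` already pays
exactly `c b d₂` on the `d₂` part, and its `d₁` coefficient is at most `c a` because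
`2c a² - 2a + c - 1 ≥ 0` for every `a`: this quadratic has discriminant `4 - 8c(c - 1)`,
which vanishes for `c = (1 + √3)/2`.
-/

lemma add_mul_min_le {p q : ℝ} (hp : 0 ≤ p) (hq : 0 ≤ q) (x y : ℝ) :
    (p + q) * min x y ≤ p * x + q * y := by
  rw [add_mul]
  exact add_le_add (mul_le_mul_of_nonneg_left (min_le_left x y) hp)
    (mul_le_mul_of_nonneg_left (min_le_right x y) hq)

lemma one_add_two_mul_sub_le {c : ℝ} (hc₀ : 0 < c) (hc : 1 ≤ 2 * c * (c - 1)) (a : ℝ) :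
    1 + 2 * a - c * (1 - a) ≤ c * a * (1 + 2 * a) := by
  -- `2c` times the difference is `(2ca - 1)² + 2c(c - 1) - 1`
  nlinarith [sq_nonneg (2 * c * a - 1)]

theorem min_le_mul_bipoint_cost {c d1 d2 a b : ℝ} (hc₁ : 1 ≤ c) (hc : 1 ≤ 2 * c * (c - 1))
    (hd1 : 0 ≤ d1) (hd2 : 0 ≤ d2) (ha : 0 ≤ a) (hb : 0 ≤ b) (hab : a + b = 1) :
    min d1 (a * d1 + b * (1 + 2 * a) * d2) ≤ c * (a * d1 + b * d2) := by
  obtain rfl : b = 1 - a := by linarith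
  rcases le_or_gt (1 + 2 * a) c with ht | ht
  · calc min d1 (a * d1 + (1 - a) * (1 + 2 * a) * d2)
        ≤ a * d1 + (1 - a) * (1 + 2 * a) * d2 := min_le_right _ _
      _ = a * d1 + (1 + 2 * a) * ((1 - a) * d2) := by ring
      _ ≤ c * (a * d1) + c * ((1 - a) * d2) :=
        add_le_add (le_mul_of_one_le_left (mul_nonneg ha hd1) hc₁)
          (mul_le_mul_of_nonneg_right ht (mul_nonneg hb hd2))
      _ = c * (a * d1 + (1 - a) * d2) := by ring
  · have hkey := one_add_two_mul_sub_le (by linarith) hc a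
    refine le_of_mul_le_mul_left ?_ (by linarith : 0 < 1 + 2 * a)
    calc (1 + 2 * a) * min d1 (a * d1 + (1 - a) * (1 + 2 * a) * d2)
        = (1 + 2 * a - c + c) * min d1 (a * d1 + (1 - a) * (1 + 2 * a) * d2) := by ring
      _ ≤ (1 + 2 * a - c) * d1 + c * (a * d1 + (1 - a) * (1 + 2 * a) * d2) :=
        add_mul_min_le (by linarith) (by linarith) _ _
      _ = (1 + 2 * a - c * (1 - a)) * d1 + (1 + 2 * a) * (c * ((1 - a) * d2)) := by ring
      _ ≤ c * a * (1 + 2 * a) * d1 + (1 + 2 * a) * (c * ((1 - a) * d2)) := by gcongr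
      _ = (1 + 2 * a) * (c * (a * d1 + (1 - a) * d2)) := by ring

lemma two_mul_one_add_sqrt_three_div_two_mul_sub_one :
    2 * ((1 + Real.sqrt 3) / 2) * ((1 + Real.sqrt 3) / 2 - 1) = 1 := by
  have h3 : Real.sqrt 3 ^ 2 = 3 := Real.sq_sqrt (by norm_num)
  linear_combination h3 / 2

theorem stmt_0 (d1 d2 a b : ℝ) (hd1 : 0 ≤ d1) (hd2 : 0 ≤ d2)
    (ha : 0 ≤ a) (hb : 0 ≤ b) (hab : a + b = 1) :
    min d1 (a * d1 + b * (1 + 2 * a) * d2) ≤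
      (1 + Real.sqrt 3) / 2 * (a * d1 + b * d2) := by
  have hsqrt : 1 ≤ Real.sqrt 3 := Real.one_le_sqrt.mpr (by norm_num)
  exact min_le_mul_bipoint_cost (by linarith) two_mul_one_add_sqrt_three_div_two_mul_sub_one.ge
    hd1 hd2 ha hb hab
end

section
/- Let $a, b \geq 0$ with $a+b=1$, and suppose $p_2 \in [b(1-a\eta), b]$ for some $\eta > 0$ with $a\eta \leq 1$, and $p_{12} \geq a(1 - p_2)$, and $a \leq 1/2$. Then for any $d_1, d_2 \geq 0$: $p_2 d_2 + p_{12} d_1 + (1 - p_2 - p_{12})(2 d_2 + d_1) \leq (1+\eta)\big(b(1+2a)d_2 + a d_1\big)$. -/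
/-! Expanding, the expected cost is `(2 - p₂ - 2 p₁₂) d₂ + (1 - p₂) d₁`, so it suffices to bound the
two coefficients. The bound on `p₁₂` turns the `d₂`-coefficient into `2b - (1 - 2a) p₂`, which for
`a ≤ 1/2` is antitone in `p₂`; hence both coefficients are controlled by the lower bound on `p₂`. -/

namespace StarRounding

theorem expected_cost_eq (p2 p12 d1 d2 : ℝ) :
    p2 * d2 + p12 * d1 + (1 - p2 - p12) * (2 * d2 + d1) =
      (2 - p2 - 2 * p12) * d2 + (1 - p2) * d1 := by
  ring

variable {a b η p2 p12 : ℝ}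

theorem one_sub_le (hab : a + b = 1) (hη : 0 ≤ η) (hp2l : b * (1 - a * η) ≤ p2) :
    1 - p2 ≤ (1 + η) * a := by
  have hb : b = 1 - a := by linarith
  subst hb
  nlinarith [mul_nonneg (sq_nonneg a) hη]

theorem two_sub_sub_two_mul_le (hab : a + b = 1) (hη : 0 ≤ η) (hp2l : b * (1 - a * η) ≤ p2)
    (hp12 : a * (1 - p2) ≤ p12) (ha2 : a ≤ 1 / 2) :
    2 - p2 - 2 * p12 ≤ (1 + η) * (b * (1 + 2 * a)) := by
  have hb : b = 1 - a := by linarith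
  subst hb
  calc 2 - p2 - 2 * p12 ≤ 2 * (1 - a) - (1 - 2 * a) * p2 := by linarith
    _ ≤ 2 * (1 - a) - (1 - 2 * a) * ((1 - a) * (1 - a * η)) := by
        gcongr; linarith
    _ ≤ (1 + η) * ((1 - a) * (1 + 2 * a)) := by
        have hpos : 0 ≤ 1 + a + 2 * a ^ 2 := by nlinarith [sq_nonneg (a + 1 / 4)]
        nlinarith [mul_nonneg (mul_nonneg (by linarith : (0 : ℝ) ≤ 1 - a) hη) hpos]

end StarRounding

open StarRounding in
theorem stmt_3_general (a b η p2 p12 d1 d2 : ℝ)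
    (hab : a + b = 1)
    (hη : 0 < η)
    (hp2l : b * (1 - a * η) ≤ p2)
    (hp12 : a * (1 - p2) ≤ p12)
    (ha2 : a ≤ 1 / 2) (hd1 : 0 ≤ d1) (hd2 : 0 ≤ d2) :
    p2 * d2 + p12 * d1 + (1 - p2 - p12) * (2 * d2 + d1) ≤
      (1 + η) * (b * (1 + 2 * a) * d2 + a * d1) := by
  have hd2_coeff := two_sub_sub_two_mul_le hab hη.le hp2l hp12 ha2
  have hd1_coeff := one_sub_le hab hη.le hp2l
  rw [expected_cost_eq]
  calc (2 - p2 - 2 * p12) * d2 + (1 - p2) * d1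
      ≤ (1 + η) * (b * (1 + 2 * a)) * d2 + (1 + η) * a * d1 := by gcongr
    _ = (1 + η) * (b * (1 + 2 * a) * d2 + a * d1) := by ring

theorem stmt_3 (a b η p2 p12 d1 d2 : ℝ)
    (ha : 0 ≤ a) (hb : 0 ≤ b) (hab : a + b = 1)
    (hη : 0 < η) (haη : a * η ≤ 1)
    (hp2l : b * (1 - a * η) ≤ p2) (hp2u : p2 ≤ b)
    (hp12 : a * (1 - p2) ≤ p12)
    (ha2 : a ≤ 1 / 2) (hd1 : 0 ≤ d1) (hd2 : 0 ≤ d2) :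
    p2 * d2 + p12 * d1 + (1 - p2 - p12) * (2 * d2 + d1) ≤
      (1 + η) * (b * (1 + 2 * a) * d2 + a * d1) :=
  stmt_3_general a b η p2 p12 d1 d2 hab hη hp2l hp12 ha2 hd1 hd2
end
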